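/- Let G be the vertex-sum of t ≥ 2 cycles of length n ≥ 3 at a vertex. Then D(G) = min{ k : k^{n-1} - k^{⌈(n-1)/2⌉} ≥ 2t }. -/

import Mathlib

/-!
Measured from the centre, the vertex-sum of `t` copies of `C_n` is a bouquet of `t` paths
`P_{n-1}` whose two end vertices are joined to the centre. For `t ≥ 2` the centre is the only
vertex of degree more than two, so every automorphism fixes it and maps each path onto a path,
straight or reversed; conversely every such map is an automorphism. Hence a colouring is
distinguishing iff its `t` colour sequences `a i` along the paths make the `2t` sequences
`a i`, `rev (a i)` pairwise distinct. The `k^(n-1) - k^⌈(n-1)/2⌉` non-palindromic sequences fall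
into reversal pairs, so such a choice exists iff there are at least `t` pairs.
-/

open Function

section Defs

universe u₁ u₂ u₃

variable {V : Type u₁} {W : Type u₂} {C : Type u₃}

/-- A coloring is distinguishing if only the identity automorphism preserves it. -/
def DistCol (G : SimpleGraph V) (c : V → C) : Prop :=
  ∀ φ : G ≃g G, (∀ x, c (φ x) = c x) → ∀ x, φ x = x

/-- The distinguishing number: the least number of colors admitting a distinguishing coloring. -/
noncomputable def Dnum (G : SimpleGraph V) : ℕ :=
  sInf {k | ∃ c : V → Fin k, DistCol G c}

/-- The distinguishing threshold: the least `k` such that every `k`-coloring is distinguishing. -/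
noncomputable def theta (G : SimpleGraph V) : ℕ :=
  sInf {k | ∀ c : V → Fin k, DistCol G c}

/-- The number of non-equivalent distinguishing colorings with at most `k` colors. -/
noncomputable def Phi (G : SimpleGraph V) (k : ℕ) : ℕ :=
  Nat.card (Quot fun c₁ c₂ : {c : V → Fin k // DistCol G c} =>
    ∃ φ : G ≃g G, ∀ x, c₁.1 x = c₂.1 (φ x))

/-- Rooted version of distinguishing: only automorphisms fixing `v` are considered. -/
def DistColR (G : SimpleGraph V) (v : V) (c : V → C) : Prop :=
  ∀ φ : G ≃g G, φ v = v → (∀ x, c (φ x) = c x) → ∀ x, φ x = x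

noncomputable def DnumR (G : SimpleGraph V) (v : V) : ℕ :=
  sInf {k | ∃ c : V → Fin k, DistColR G v c}

noncomputable def thetaR (G : SimpleGraph V) (v : V) : ℕ :=
  sInf {k | ∀ c : V → Fin k, DistColR G v c}

noncomputable def PhiR (G : SimpleGraph V) (v : V) (k : ℕ) : ℕ :=
  Nat.card (Quot fun c₁ c₂ : {c : V → Fin k // DistColR G v c} =>
    ∃ φ : G ≃g G, φ v = v ∧ ∀ x, c₁.1 x = c₂.1 (φ x))

/-- A vertex `u` is steady if every automorphism of `G - u` extends to an
automorphism of `G` fixing `u`. -/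
def Steady (G : SimpleGraph V) (u : V) : Prop :=
  ∀ ψ : G.induce {w : V | w ≠ u} ≃g G.induce {w : V | w ≠ u},
    ∃ φ : G ≃g G, φ u = u ∧ ∀ w : {w : V | w ≠ u}, φ ↑w = ↑(ψ w)

/-- The vertex-sum of the graphs `G i` (all containing the vertex `u`) at `u`:
`none` is the central vertex obtained by identifying the copies of `u`. -/
def VertexSum {t : ℕ} (G : Fin t → SimpleGraph V) (u : V) :
    SimpleGraph (Option (Fin t × {w : V // w ≠ u})) where
  Adj x y :=
    (∃ i w, x = none ∧ y = some (i, w) ∧ (G i).Adj u w.1) ∨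
    (∃ i w, y = none ∧ x = some (i, w) ∧ (G i).Adj u w.1) ∨
    (∃ i w z, x = some (i, w) ∧ y = some (i, z) ∧ (G i).Adj w.1 z.1)
  symm := by
    constructor
    rintro x y (⟨i, w, hx, hy, h⟩ | ⟨i, w, hy, hx, h⟩ | ⟨i, w, z, hx, hy, h⟩)
    · exact Or.inr (Or.inl ⟨i, w, hx, hy, h⟩)
    · exact Or.inl ⟨i, w, hy, hx, h⟩
    · exact Or.inr (Or.inr ⟨i, z, w, hy, hx, h.symm⟩)
  loopless := by
    constructor
    rintro x (⟨i, w, hx, hy, h⟩ | ⟨i, w, hy, hx, h⟩ | ⟨i, w, z, hx, hy, h⟩)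
    · rw [hx] at hy; exact (Option.some_ne_none _ hy.symm).elim
    · rw [hy] at hx; exact (Option.some_ne_none _ hx.symm).elim
    · rw [hx] at hy
      obtain rfl : w = z := by simpa using hy
      exact h.ne rfl

/-- Disjoint union of the graphs `H i`. -/
def SigmaUnion {t : ℕ} (H : Fin t → SimpleGraph W) : SimpleGraph (Fin t × W) where
  Adj x y := x.1 = y.1 ∧ (H x.1).Adj x.2 y.2
  symm := by
    constructor
    rintro ⟨i, a⟩ ⟨j, b⟩ ⟨rfl, h⟩
    exact ⟨rfl, h.symm⟩
  loopless := by constructor; rintro x ⟨-, h⟩; exact h.ne rfl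

/-- A graph is 2-connected if it has at least 3 vertices and no cut vertex. -/
def TwoConnected (G : SimpleGraph V) [Fintype V] : Prop :=
  3 ≤ Fintype.card V ∧ ∀ x : V, (G.induce {w : V | w ≠ x}).Connected

/-- The smooth rooted product `G_s(H)` where `H` is rooted at `v`. -/
def RootedProd (G : SimpleGraph V) (H : SimpleGraph W) (v : W) :
    SimpleGraph (V × W) where
  Adj x y := (x.1 = y.1 ∧ H.Adj x.2 y.2) ∨ (x.2 = v ∧ y.2 = v ∧ G.Adj x.1 y.1)
  symm := by
    constructor
    rintro x y (⟨h1, h2⟩ | ⟨h1, h2, h3⟩)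
    · exact Or.inl ⟨h1.symm, h2.symm⟩
    · exact Or.inr ⟨h2, h1, h3.symm⟩
  loopless := by constructor; rintro x (⟨-, h⟩ | ⟨-, -, h⟩) <;> exact h.ne rfl

/-- The corona product `G ⊙ H`: the vertex `(g, none)` is the vertex `g` of `G`,
and `(g, some h)` is the vertex `h` in the copy of `H` attached to `g`. -/
def Corona (G : SimpleGraph V) (H : SimpleGraph W) :
    SimpleGraph (V × Option W) where
  Adj x y :=
    (x.2 = none ∧ y.2 = none ∧ G.Adj x.1 y.1) ∨
    (x.1 = y.1 ∧ ∃ a b, x.2 = some a ∧ y.2 = some b ∧ H.Adj a b) ∨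
    (x.1 = y.1 ∧ x.2 = none ∧ ∃ a, y.2 = some a) ∨
    (x.1 = y.1 ∧ y.2 = none ∧ ∃ a, x.2 = some a)
  symm := by
    constructor
    rintro x y (⟨h1, h2, h3⟩ | ⟨h1, a, b, h2, h3, h4⟩ | ⟨h1, h2, h3⟩ | ⟨h1, h2, h3⟩)
    · exact Or.inl ⟨h2, h1, h3.symm⟩
    · exact Or.inr (Or.inl ⟨h1.symm, b, a, h3, h2, h4.symm⟩)
    · exact Or.inr (Or.inr (Or.inr ⟨h1.symm, h2, h3⟩))
    · exact Or.inr (Or.inr (Or.inl ⟨h1.symm, h2, h3⟩))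
  loopless := by
    constructor
    rintro x (⟨-, -, h⟩ | ⟨-, a, b, h2, h3, h4⟩ | ⟨-, h2, a, h3⟩ | ⟨-, h2, a, h3⟩)
    · exact h.ne rfl
    · rw [h2] at h3; exact h4.ne (Option.some.inj h3)
    · rw [h2] at h3; exact (Option.some_ne_none _ h3.symm).elim
    · rw [h2] at h3; exact (Option.some_ne_none _ h3.symm).elim

/-- The lexicographic product `G ∘ H`. -/
def LexProd (G : SimpleGraph V) (H : SimpleGraph W) : SimpleGraph (V × W) where
  Adj x y := G.Adj x.1 y.1 ∨ (x.1 = y.1 ∧ H.Adj x.2 y.2)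
  symm := by
    constructor
    rintro x y (h | ⟨h1, h2⟩)
    exacts [Or.inl h.symm, Or.inr ⟨h1.symm, h2.symm⟩]
  loopless := by constructor; rintro x (h | ⟨-, h⟩) <;> exact h.ne rfl

/-- The number of cycles (orbits, counting fixed points) of a permutation. -/
noncomputable def numCycles (e : Equiv.Perm V) : ℕ :=
  Nat.card (Quot fun x y : V => ∃ n : ℤ, (e ^ n) x = y)

end Defs

section Involution

variable {ι β : Type*}

def twist (r : β → β) (a : ι → β) (p : ι × Bool) : β :=
  bif p.2 then r (a p.1) else a p.1

theorem Function.Involutive.twist_not {r : β → β} (hr : Involutive r) (a : ι → β) (i : ι)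
    (b : Bool) : twist r a (i, !b) = r (twist r a (i, b)) := by
  cases b <;> simp [twist, hr (a i)]

theorem Function.Involutive.card_ne_eq_two_mul [LinearOrder β] [Finite β] {r : β → β}
    (hr : Involutive r) : Nat.card {x // r x ≠ x} = 2 * Nat.card {x // x < r x} := by
  classical
  have hswap : {x // r x < x} ≃ {x // x < r x} :=
    hr.toPerm.subtypeEquiv fun x => by simp [hr x]
  have hsplit : {x // r x ≠ x} ≃ {x // x < r x} ⊕ {x // r x < x} :=
    (Equiv.subtypeEquivRight fun x => by rw [ne_comm, ne_iff_lt_or_gt]).trans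
      (subtypeOrEquiv _ _ fun _ hlt hgt x hx => (hlt x hx).asymm (hgt x hx))
  rw [Nat.card_congr hsplit, Nat.card_sum, Nat.card_congr hswap, two_mul]

theorem Function.Involutive.two_mul_card_le_of_twist_injective [Finite β] {r : β → β}
    (hr : Involutive r) {a : ι → β} (ha : Injective (twist r a)) :
    2 * Nat.card ι ≤ Nat.card {x // r x ≠ x} := by
  have hne : ∀ p, r (twist r a p) ≠ twist r a p := by
    rintro ⟨i, b⟩
    rw [← hr.twist_not]
    exact ha.ne (by simp)
  have := Nat.card_le_card_of_injective (fun p => (⟨twist r a p, hne p⟩ : {x // r x ≠ x}))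
    fun p q h => ha (congrArg Subtype.val h)
  simpa [mul_comm] using this

theorem Function.Involutive.exists_twist_injective_of_le [Finite ι] [Finite β] {r : β → β}
    (hr : Involutive r) (h : 2 * Nat.card ι ≤ Nat.card {x // r x ≠ x}) :
    ∃ a : ι → β, Injective (twist r a) := by
  -- under any linear order, `x < r x` picks one element from each pair `{x, r x}`
  let _ : LinearOrder β := LinearOrder.lift' _ (Finite.equivFin β).injective
  rw [hr.card_ne_eq_two_mul, Nat.mul_le_mul_left_iff two_pos] at h
  let e : ι ↪ {x // x < r x} :=
    ((Finite.equivFin ι).toEmbedding.trans (Fin.castLEEmb h)).trans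
      (Finite.equivFin _).symm.toEmbedding
  refine ⟨fun i => e i, ?_⟩
  rintro ⟨i, _ | _⟩ ⟨j, _ | _⟩ hij <;> simp only [twist, cond_false, cond_true] at hij
  · rw [e.injective (Subtype.ext hij)]
  · have hi := (e i).2
    rw [hij, hr] at hi
    exact absurd hi (e j).2.asymm
  · have hj := (e j).2
    rw [← hij, hr] at hj
    exact absurd hj (e i).2.asymm
  · rw [e.injective (Subtype.ext (hr.injective hij))]

theorem Function.Involutive.exists_twist_injective_iff [Finite ι] [Finite β] {r : β → β}
    (hr : Involutive r) :
    (∃ a : ι → β, Injective (twist r a)) ↔ 2 * Nat.card ι ≤ Nat.card {x // r x ≠ x} :=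
  ⟨fun ⟨_, ha⟩ => hr.two_mul_card_le_of_twist_injective ha, hr.exists_twist_injective_of_le⟩

end Involution

section Palindrome

variable {α : Type*} {m : ℕ}

def palindromeEquiv : {s : Fin m → α // s ∘ Fin.rev = s} ≃ (Fin ((m + 1) / 2) → α) where
  toFun s j := s.1 ⟨j, by omega⟩
  invFun b := ⟨fun i => b ⟨min i (m - 1 - i), by omega⟩, by
    funext i
    simp only [comp_apply, Fin.val_rev]
    congr 2
    omega⟩
  left_inv := by
    rintro ⟨s, hs⟩
    ext i
    rcases le_or_gt i.1 (m - 1 - i.1) with h | h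
    · simp [min_eq_left h]
    · have hi := congrFun hs i
      simp only [comp_apply] at hi
      simp only [min_eq_right h.le, ← hi]
      congr 1
      ext
      simp only [Fin.val_rev]
      omega
  right_inv b := by
    funext j
    simp only
    congr 2
    omega

theorem card_palindromes [Finite α] :
    Nat.card {s : Fin m → α // s ∘ Fin.rev = s} = Nat.card α ^ ((m + 1) / 2) := by
  rw [Nat.card_congr palindromeEquiv, Nat.card_fun, Nat.card_fin]

theorem card_not_palindromes [Finite α] :
    Nat.card {s : Fin m → α // s ∘ Fin.rev ≠ s} =
      Nat.card α ^ m - Nat.card α ^ ((m + 1) / 2) := by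
  classical
  have h := Nat.card_congr (Equiv.sumCompl fun s : Fin m → α => s ∘ Fin.rev = s)
  rw [Nat.card_sum, card_palindromes, Nat.card_fun, Nat.card_fin] at h
  simp only [ne_eq]
  omega

end Palindrome

section Iso

variable {V W C : Type*} {G : SimpleGraph V} {H : SimpleGraph W}

theorem DistCol.comp_iso {c : W → C} (hc : DistCol H c) (e : G ≃g H) : DistCol G (c ∘ e) := by
  intro φ hφ x
  simpa using hc ((e.symm.trans φ).trans e) (fun y => by simpa using hφ (e.symm y)) (e x)

theorem Dnum_eq_of_iso (e : G ≃g H) : Dnum G = Dnum H := by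
  unfold Dnum
  congr 1
  ext k
  exact ⟨fun ⟨c, hc⟩ => ⟨c ∘ e.symm, hc.comp_iso e.symm⟩,
    fun ⟨c, hc⟩ => ⟨c ∘ e, hc.comp_iso e⟩⟩

theorem SimpleGraph.Iso.ncard_neighborSet (φ : G ≃g H) (v : V) :
    (H.neighborSet (φ v)).ncard = (G.neighborSet v).ncard := by
  rw [← Nat.card_coe_set_eq, ← Nat.card_coe_set_eq, Nat.card_congr (φ.mapNeighborSet v)]

end Iso

open SimpleGraph

/-- `none` is the centre and `some (i, a)` is vertex `a` of the path `i`; the ends of each path are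
joined to the centre. -/
def Bouquet (t m : ℕ) : SimpleGraph (Option (Fin t × Fin m)) where
  Adj
    | none, none => False
    | none, some (_, a) | some (_, a), none => a.val = 0 ∨ a.val + 1 = m
    | some (i, a), some (j, b) => i = j ∧ (pathGraph m).Adj a b
  symm := by
    constructor
    rintro (_ | ⟨i, a⟩) (_ | ⟨j, b⟩) h
    exacts [h, h, h, ⟨h.1.symm, h.2.symm⟩]
  loopless := by
    constructor
    rintro (_ | ⟨i, a⟩) h
    exacts [h, h.2.ne rfl]

namespace Bouquet

variable {t m : ℕ} {C : Type*}

@[simp] theorem adj_none_some {i : Fin t} {a : Fin m} :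
    (Bouquet t m).Adj none (some (i, a)) ↔ a.val = 0 ∨ a.val + 1 = m := Iff.rfl

@[simp] theorem adj_some_none {i : Fin t} {a : Fin m} :
    (Bouquet t m).Adj (some (i, a)) none ↔ a.val = 0 ∨ a.val + 1 = m := Iff.rfl

@[simp] theorem adj_some_some {i j : Fin t} {a b : Fin m} :
    (Bouquet t m).Adj (some (i, a)) (some (j, b)) ↔ i = j ∧ (pathGraph m).Adj a b := Iff.rfl

def revIf (b : Bool) : Equiv.Perm (Fin m) := bif b then Fin.revPerm else 1

@[simp] theorem revIf_false (a : Fin m) : revIf false a = a := rfl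

@[simp] theorem revIf_true (a : Fin m) : revIf true a = a.rev := rfl

theorem revIf_revIf (b b' : Bool) (a : Fin m) : revIf b (revIf b' a) = revIf (b ^^ b') a := by
  cases b <;> cases b' <;> simp

@[simp] theorem revIf_revIf_self (b : Bool) (a : Fin m) : revIf b (revIf b a) = a := by
  simp [revIf_revIf]

theorem revIf_eq_zero_iff (hm : 2 ≤ m) (b : Bool) :
    revIf b (⟨0, by omega⟩ : Fin m) = ⟨0, by omega⟩ ↔ b = false := by
  cases b
  · simp
  · simp only [revIf_true, Fin.ext_iff, Fin.val_rev, Bool.true_eq_false, iff_false]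
    omega

@[simp] theorem pathGraph_adj_revIf (b : Bool) {x y : Fin m} :
    (pathGraph m).Adj (revIf b x) (revIf b y) ↔ (pathGraph m).Adj x y := by
  cases b
  · rfl
  · simp only [revIf_true, pathGraph_adj, Fin.val_rev]
    omega

@[simp] theorem revIf_isEnd (b : Bool) (a : Fin m) :
    (revIf b a).val = 0 ∨ (revIf b a).val + 1 = m ↔ a.val = 0 ∨ a.val + 1 = m := by
  cases b
  · rfl
  · simp only [revIf_true, Fin.val_rev]
    omega

def wreath (σ : Equiv.Perm (Fin t)) (ε : Fin t → Bool) : Bouquet t m ≃g Bouquet t m where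
  toEquiv := Equiv.optionCongr (σ.prodShear fun i => revIf (ε i))
  map_rel_iff' := by
    rintro (_ | ⟨i, a⟩) (_ | ⟨j, b⟩)
    · simp
    · simp
    · simp
    · simp only [Equiv.optionCongr_apply, Equiv.prodShear_apply, Option.map_some, adj_some_some,
        EmbeddingLike.apply_eq_iff_eq, and_congr_right_iff]
      rintro rfl
      exact pathGraph_adj_revIf _

@[simp] theorem wreath_some (σ : Equiv.Perm (Fin t)) (ε : Fin t → Bool) (i : Fin t)
    (a : Fin m) :
    wreath σ ε (some (i, a)) = some (σ i, revIf (ε i) a) := rfl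

theorem ncard_neighborSet_some_le (i : Fin t) (a : Fin m) :
    ((Bouquet t m).neighborSet (some (i, a))).ncard ≤ 2 := by
  -- tag each neighbour by whether it comes after `a` along the cycle through leg `i`
  let after : Option (Fin t × Fin m) → Bool
    | none => decide (a.val + 1 = m)
    | some (_, b) => decide (b.val = a.val + 1)
  calc _ ≤ (Set.univ : Set Bool).ncard :=
        Set.ncard_le_ncard_of_injOn after (fun _ _ => trivial) ?_
    _ = 2 := by simp
  rintro (_ | ⟨j, b⟩) hx (_ | ⟨j', b'⟩) hy h <;>
    simp only [mem_neighborSet, adj_some_none, adj_some_some, pathGraph_adj, after,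
      decide_eq_decide, Option.some.injEq, Prod.ext_iff, Fin.ext_iff] at hx hy h ⊢ <;>
    omega

theorem two_lt_ncard_neighborSet_none (ht : 2 ≤ t) (hm : 2 ≤ m) :
    2 < ((Bouquet t m).neighborSet none).ncard := by
  rw [Set.two_lt_ncard_iff]
  refine ⟨some (⟨0, by omega⟩, ⟨0, by omega⟩),
    some (⟨1, by omega⟩, ⟨0, by omega⟩),
    some (⟨0, by omega⟩, ⟨m - 1, by omega⟩), ?_⟩
  simp only [mem_neighborSet, adj_none_some, zero_add, true_or, ne_eq, Option.some.injEq,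
    Prod.mk.injEq, Fin.ext_iff, zero_ne_one, and_true, not_false_eq_true, true_and, one_ne_zero,
    false_and]
  omega

theorem apply_none (ht : 2 ≤ t) (hm : 2 ≤ m) (φ : Bouquet t m ≃g Bouquet t m) :
    φ none = none := by
  rcases hφ : φ none with _ | ⟨i, a⟩
  · rfl
  · have := φ.ncard_neighborSet none
    rw [hφ] at this
    have := ncard_neighborSet_some_le i a
    have := two_lt_ncard_neighborSet_none ht hm
    omega

theorem exists_apply_some_of_adj (φ : Bouquet t m ≃g Bouquet t m) (hnone : φ none = none)
    {i p : Fin t} {b : Bool} {x y : Fin m} (hx : φ (some (i, x)) = some (p, revIf b x))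
    (hxy : (pathGraph m).Adj x y) :
    ∃ y', φ (some (i, y)) = some (p, revIf b y') ∧ (pathGraph m).Adj x y' := by
  have hadj : (Bouquet t m).Adj (φ (some (i, x))) (φ (some (i, y))) :=
    φ.map_adj_iff.mpr ⟨rfl, hxy⟩
  rw [hx] at hadj
  rcases hy : φ (some (i, y)) with _ | ⟨q, c⟩
  · exact absurd (φ.injective (hy.trans hnone.symm)) (by simp)
  · rw [hy, adj_some_some] at hadj
    obtain ⟨rfl, hc⟩ := hadj
    refine ⟨revIf b c, by simp, ?_⟩
    rwa [← pathGraph_adj_revIf b, revIf_revIf_self]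

theorem apply_some_of_apply_zero (φ : Bouquet t m ≃g Bouquet t m) (hnone : φ none = none)
    {i p : Fin t} {b : Bool} (hm : 0 < m)
    (h0 : φ (some (i, ⟨0, hm⟩)) = some (p, revIf b ⟨0, hm⟩)) (j : Fin m) :
    φ (some (i, j)) = some (p, revIf b j) := by
  suffices ∀ J (hJ : J < m), φ (some (i, ⟨J, hJ⟩)) = some (p, revIf b ⟨J, hJ⟩) from
    this j j.2
  intro J
  induction J using Nat.strong_induction_on with
  | _ J ih =>
    intro hJ
    rcases J with _ | J
    · exact h0
    obtain ⟨y, hy, hadj⟩ := exists_apply_some_of_adj φ hnone (ih J (by omega) (by omega))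
      (y := ⟨J + 1, hJ⟩) (by simp [pathGraph_adj])
    rw [pathGraph_adj, Fin.val_mk] at hadj
    rcases hadj with hadj | hadj
    · rw [hy]
      congr
      ext
      exact hadj.symm
    -- otherwise `φ` sends the vertices `J + 1` and `J - 1` of leg `i` to the same vertex
    obtain ⟨J, rfl⟩ : ∃ J', J = J' + 1 := ⟨J - 1, by omega⟩
    have hyJ : y.val = J := by omega
    rw [show y = ⟨J, by omega⟩ from Fin.ext hyJ] at hy
    have := φ.injective (hy.trans (ih J (by omega) (by omega)).symm)
    simp only [Option.some.injEq, Prod.mk.injEq, Fin.mk.injEq, true_and] at this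
    omega

theorem exists_apply_some (ht : 2 ≤ t) (hm : 2 ≤ m) (φ : Bouquet t m ≃g Bouquet t m)
    (i : Fin t) : ∃ p b, ∀ j, φ (some (i, j)) = some (p, revIf b j) := by
  have hadj : (Bouquet t m).Adj none (φ (some (i, ⟨0, by omega⟩))) := by
    rw [← apply_none ht hm φ]
    exact φ.map_adj_iff.mpr (by simp)
  rcases h0 : φ (some (i, ⟨0, by omega⟩)) with _ | ⟨p, e⟩
  · rw [h0] at hadj
    exact absurd hadj (SimpleGraph.irrefl _)
  · rw [h0, adj_none_some] at hadj
    obtain ⟨b, rfl⟩ : ∃ b, e = revIf b ⟨0, by omega⟩ := by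
      rcases hadj with he | he
      · exact ⟨false, Fin.ext he⟩
      · exact ⟨true, Fin.ext (by simp only [revIf_true, Fin.val_rev]; omega)⟩
    exact ⟨p, b, apply_some_of_apply_zero φ (apply_none ht hm φ) _ h0⟩

theorem twist_rev (a : Fin t → Fin m → C) (i : Fin t) (b : Bool) :
    twist (· ∘ Fin.rev) a (i, b) = a i ∘ revIf b := by
  cases b <;> rfl

theorem distCol_iff (ht : 2 ≤ t) (hm : 2 ≤ m) (c : Option (Fin t × Fin m) → C) :
    DistCol (Bouquet t m) c ↔ Injective (twist (· ∘ Fin.rev) fun i j => c (some (i, j))) := by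
  set a : Fin t → Fin m → C := fun i j => c (some (i, j))
  constructor
  · rintro hc ⟨i, b⟩ ⟨j, b'⟩ h
    simp only [twist_rev] at h
    have hij : a i = a j ∘ revIf (b ^^ b') := by
      funext y
      simpa [revIf_revIf, Bool.xor_comm] using congrFun h (revIf b y)
    -- swap legs `i` and `j`, reversing both if their colourings are mirror images
    let ψ := wreath (m := m) (Equiv.swap i j) fun x => decide (x = i ∨ x = j) && (b ^^ b')
    have hψ : ∀ x, c (ψ x) = c x := by
      rintro (_ | ⟨x, y⟩)
      · rfl
      by_cases hxi : x = i
      · subst hxi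
        simpa [ψ] using (congrFun hij y).symm
      by_cases hxj : x = j
      · subst hxj
        simpa [ψ, hxi, a] using congrFun hij (revIf (b ^^ b') y)
      · simp [ψ, hxi, hxj, Equiv.swap_apply_of_ne_of_ne hxi hxj]
    have h0 := hc ψ hψ (some (i, ⟨0, by omega⟩))
    simp only [ψ, wreath_some, Equiv.swap_apply_left, Option.some.injEq, Prod.mk.injEq] at h0
    obtain ⟨rfl, h0⟩ := h0
    simp only [true_or, decide_true, Bool.true_and, revIf_eq_zero_iff hm] at h0
    simpa using h0
  · intro hinj φ hφ
    have hleg (i : Fin t) (j : Fin m) : φ (some (i, j)) = some (i, j) := by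
      obtain ⟨p, b, hpb⟩ := exists_apply_some ht hm φ i
      have : twist (· ∘ Fin.rev) a (p, b) = twist (· ∘ Fin.rev) a (i, false) := by
        rw [twist_rev, twist_rev]
        funext j
        simpa [hpb] using hφ (some (i, j))
      obtain ⟨rfl, rfl⟩ := Prod.mk.inj (hinj this)
      exact hpb j
    rintro (_ | ⟨i, j⟩)
    exacts [apply_none ht hm φ, hleg i j]

theorem exists_distCol_iff (ht : 2 ≤ t) (hm : 2 ≤ m) (k : ℕ) :
    (∃ c : Option (Fin t × Fin m) → Fin k, DistCol (Bouquet t m) c) ↔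
      2 * t ≤ k ^ m - k ^ ((m + 1) / 2) := by
  have hr : Involutive fun s : Fin m → Fin k => s ∘ Fin.rev := fun s => by
    funext
    simp
  calc (∃ c : Option (Fin t × Fin m) → Fin k, DistCol (Bouquet t m) c)
      ↔ ∃ a : Fin t → Fin m → Fin k, Injective (twist (· ∘ Fin.rev) a) := by
        refine ⟨fun ⟨c, hc⟩ => ⟨_, (distCol_iff ht hm c).mp hc⟩, fun ⟨a, ha⟩ => ?_⟩
        exact ⟨fun x => x.elim (a ⟨0, by omega⟩ ⟨0, by omega⟩) fun p => a p.1 p.2,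
          (distCol_iff ht hm _).mpr ha⟩
    _ ↔ 2 * Nat.card (Fin t) ≤ Nat.card {s : Fin m → Fin k // s ∘ Fin.rev ≠ s} :=
        hr.exists_twist_injective_iff
    _ ↔ _ := by rw [card_not_palindromes, Nat.card_fin, Nat.card_fin]

end Bouquet

section VertexSum

variable {V : Type*} {t : ℕ} {G : Fin t → SimpleGraph V} {u : V}

@[simp] theorem vertexSum_adj_none_some {i : Fin t} {w : {w // w ≠ u}} :
    (VertexSum G u).Adj none (some (i, w)) ↔ (G i).Adj u w := by
  simp only [VertexSum]
  aesop

@[simp] theorem vertexSum_adj_some_none {i : Fin t} {w : {w // w ≠ u}} :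
    (VertexSum G u).Adj (some (i, w)) none ↔ (G i).Adj u w := by
  simp only [VertexSum]
  aesop

@[simp] theorem vertexSum_adj_some_some {i j : Fin t} {w z : {w // w ≠ u}} :
    (VertexSum G u).Adj (some (i, w)) (some (j, z)) ↔ i = j ∧ (G i).Adj w z := by
  simp only [VertexSum]
  aesop

end VertexSum

section CycleLeg

variable {m : ℕ}

theorem Fin.val_sub_eq_one_iff {a : Fin (m + 1)} (ha : a ≠ 0) (b : Fin (m + 1)) :
    (a - b).val = 1 ↔ a.val = b.val + 1 := by
  have ha' : a.val ≠ 0 := fun h => ha (Fin.ext h)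
  rcases le_or_gt b a with hba | hab
  · rw [Fin.coe_sub_iff_le.mpr hba]
    omega
  · rw [Fin.coe_sub_iff_lt.mpr hab]
    omega

def cycleLegEquiv (u : Fin (m + 1)) : {w // w ≠ u} ≃ Fin m :=
  ((Equiv.subRight u).subtypeEquiv fun _ => sub_ne_zero.symm).trans (finSuccAboveEquiv 0).symm

theorem cycleLegEquiv_add_one (u : Fin (m + 1)) (w : {w // w ≠ u}) :
    (cycleLegEquiv u w).val + 1 = (w.1 - u).val := by
  have h := congrArg Subtype.val ((finSuccAboveEquiv (0 : Fin (m + 1))).apply_symm_apply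
    ⟨w.1 - u, sub_ne_zero.mpr w.2⟩)
  simp only [finSuccAboveEquiv_apply, Fin.succAbove_zero] at h
  rw [← Fin.val_succ]
  exact congrArg Fin.val h

theorem cycleGraph_adj_center (u : Fin (m + 1)) (w : {w // w ≠ u}) :
    (cycleGraph (m + 1)).Adj u w ↔
      (cycleLegEquiv u w).val = 0 ∨ (cycleLegEquiv u w).val + 1 = m := by
  have hw := cycleLegEquiv_add_one u w
  have hne : w.1 - u ≠ 0 := sub_ne_zero.mpr w.2
  rw [cycleGraph_adj', ← neg_sub, Fin.val_neg, if_neg hne]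
  omega

theorem cycleGraph_adj_leg (u : Fin (m + 1)) (w z : {w // w ≠ u}) :
    (cycleGraph (m + 1)).Adj w z ↔ (pathGraph m).Adj (cycleLegEquiv u w) (cycleLegEquiv u z) := by
  rw [cycleGraph_adj', pathGraph_adj, ← sub_sub_sub_cancel_right w.1 z.1 u,
    ← sub_sub_sub_cancel_right z.1 w.1 u, Fin.val_sub_eq_one_iff (sub_ne_zero.mpr w.2),
    Fin.val_sub_eq_one_iff (sub_ne_zero.mpr z.2), ← cycleLegEquiv_add_one,
    ← cycleLegEquiv_add_one]
  omega

end CycleLeg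

def vertexSumCycleIso (t : ℕ) {m : ℕ} (u : Fin (m + 1)) :
    VertexSum (fun _ : Fin t => cycleGraph (m + 1)) u ≃g Bouquet t m where
  toEquiv := Equiv.optionCongr ((Equiv.refl _).prodCongr (cycleLegEquiv u))
  map_rel_iff' := by
    rintro (_ | ⟨i, w⟩) (_ | ⟨j, z⟩) <;>
      simp [cycleGraph_adj_center, cycleGraph_adj_leg]

/-- the distinguishing number of the vertex-sum of `t ≥ 2` cycles of length
`n ≥ 3` at a vertex is `min { k : k^(n-1) - k^⌈(n-1)/2⌉ ≥ 2t }`. -/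
theorem stmt9 (n t : ℕ) (hn : 3 ≤ n) (ht : 2 ≤ t) (u : Fin n) :
    Dnum (VertexSum (fun _ : Fin t => SimpleGraph.cycleGraph n) u) =
      sInf {k | 2 * t ≤ k ^ (n - 1) - k ^ ((n - 1 + 1) / 2)} := by
  obtain ⟨m, rfl⟩ : ∃ m, n = m + 1 := ⟨n - 1, by omega⟩
  rw [Dnum_eq_of_iso (vertexSumCycleIso t u), Dnum, Nat.add_sub_cancel]
  congr 1
  ext k
  exact Bouquet.exists_distCol_iff ht (by omega) k
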